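/- Let ω > 0 and α ∈ ((√(1+4ω) - 1)/2, (√(48ω+9) - 3)/4), with q(α) = 16ω - 4α² - 4α + 3 and modulus k² = (√3·α·√(q(α)) - 12ω + 6α² + 9α)/(2√3·α·√(q(α))). Then the partial derivative of k with respect to ω satisfies dk/dω = -√3·(2α + 8ω + 3)/(k·α·q(α)^{3/2}) < 0 (with α held fixed). -/

import Mathlib

/-- The elliptic modulus k(α, ω) of the dnoidal wave, as a function of ω for fixed α. -/
noncomputable def modulusK (α ω : ℝ) : ℝ :=
  Real.sqrt ((Real.sqrt 3 * α * Real.sqrt (16 * ω - 4 * α ^ 2 - 4 * α + 3)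
      - 12 * ω + 6 * α ^ 2 + 9 * α) /
    (2 * Real.sqrt 3 * α * Real.sqrt (16 * ω - 4 * α ^ 2 - 4 * α + 3)))

private lemma modulus_aux (ω α s r : ℝ) (hα : α ≠ 0)
    (hs : s ≠ 0) (hr : r ≠ 0)
    (hs2 : s ^ 2 = 16 * ω - 4 * α ^ 2 - 4 * α + 3)
    (hr2 : r ^ 2 = 3) :
    -(2 * r * (2 * α + 8 * ω + 3)) / (α * s ^ 3) =
    ((r * α * (16 / (2 * s)) - 12) * (2 * r * α * s) -
        (r * α * s - 12 * ω + 6 * α ^ 2 + 9 * α) * (2 * r * α * (16 / (2 * s)))) /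
      (2 * r * α * s) ^ 2 := by
  field_simp
  ring_nf
  linear_combination (24:ℝ) * hs2 + (-8 * (2 * α + 8 * ω + 3)) * hr2


private lemma modulus_aux2 (x k a s r : ℝ) (hk : k ≠ 0) (ha : a ≠ 0) (hs : s ≠ 0) :
    -(2 * r * x) / (a * s ^ 3) / (2 * k) = -(r * x) / (k * a * s ^ 3) := by
  field_simp

/-- With α fixed, dk/dω = -√3·(2α + 8ω + 3)/(k·α·q(α)^{3/2}) < 0. -/
theorem modulus_deriv_omega (ω α : ℝ) (hω : 0 < ω)
    (hlb : (Real.sqrt (1 + 4 * ω) - 1) / 2 < α)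
    (hub : α < (Real.sqrt (48 * ω + 9) - 3) / 4) :
    deriv (fun ω' => modulusK α ω') ω =
      -(Real.sqrt 3 * (2 * α + 8 * ω + 3)) /
        (modulusK α ω * α * (16 * ω - 4 * α ^ 2 - 4 * α + 3) ^ ((3 : ℝ) / 2)) ∧
    deriv (fun ω' => modulusK α ω') ω < 0 := by
  have h1 : Real.sqrt (1 + 4 * ω) ^ 2 = 1 + 4 * ω := Real.sq_sqrt (by linarith)
  have h2 : Real.sqrt (48 * ω + 9) ^ 2 = 48 * ω + 9 := Real.sq_sqrt (by linarith)
  have h1n : (0:ℝ) ≤ Real.sqrt (1 + 4 * ω) := Real.sqrt_nonneg _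
  have h2n : (0:ℝ) ≤ Real.sqrt (48 * ω + 9) := Real.sqrt_nonneg _
  have hgt1 : (1:ℝ) < Real.sqrt (1 + 4 * ω) := by nlinarith
  have hα : 0 < α := by nlinarith
  have hω1 : ω < α ^ 2 + α := by nlinarith
  have hω2 : 2 * α ^ 2 + 3 * α < 6 * ω := by nlinarith
  have hq : 0 < 16 * ω - 4 * α ^ 2 - 4 * α + 3 := by nlinarith
  have key : (6 * α ^ 2 + 9 * α - 12 * ω) ^ 2 < 3 * α ^ 2 * (16 * ω - 4 * α ^ 2 - 4 * α + 3) := by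
    nlinarith [mul_pos (sub_pos.2 hω1) (sub_pos.2 hω2), sq_nonneg α]
  have hr3 : (0:ℝ) < Real.sqrt 3 := Real.sqrt_pos.2 (by norm_num)
  have hr2 : Real.sqrt 3 ^ 2 = 3 := Real.sq_sqrt (by norm_num)
  have hs : 0 < Real.sqrt (16 * ω - 4 * α ^ 2 - 4 * α + 3) := Real.sqrt_pos.2 hq
  have hs2 : Real.sqrt (16 * ω - 4 * α ^ 2 - 4 * α + 3) ^ 2 = 16 * ω - 4 * α ^ 2 - 4 * α + 3 :=
    Real.sq_sqrt hq.le
  have hx : 0 < Real.sqrt 3 * α * Real.sqrt (16 * ω - 4 * α ^ 2 - 4 * α + 3) := by positivity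
  have hx2 : (Real.sqrt 3 * α * Real.sqrt (16 * ω - 4 * α ^ 2 - 4 * α + 3)) ^ 2
      = 3 * α ^ 2 * (16 * ω - 4 * α ^ 2 - 4 * α + 3) := by
    rw [mul_pow, mul_pow, hr2, hs2]
  have hN : 0 < Real.sqrt 3 * α * Real.sqrt (16 * ω - 4 * α ^ 2 - 4 * α + 3)
      - 12 * ω + 6 * α ^ 2 + 9 * α := by
    nlinarith [key, hx, hx2,
      sq_nonneg (Real.sqrt 3 * α * Real.sqrt (16 * ω - 4 * α ^ 2 - 4 * α + 3)
        + (6 * α ^ 2 + 9 * α - 12 * ω))]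
  have hD : 0 < 2 * Real.sqrt 3 * α * Real.sqrt (16 * ω - 4 * α ^ 2 - 4 * α + 3) := by positivity
  have hND : 0 < (Real.sqrt 3 * α * Real.sqrt (16 * ω - 4 * α ^ 2 - 4 * α + 3)
      - 12 * ω + 6 * α ^ 2 + 9 * α) /
      (2 * Real.sqrt 3 * α * Real.sqrt (16 * ω - 4 * α ^ 2 - 4 * α + 3)) := div_pos hN hD
  -- derivative machinery
  have hinner : HasDerivAt (fun ω' : ℝ => 16 * ω' - 4 * α ^ 2 - 4 * α + 3) 16 ω := by
    have h := (hasDerivAt_id ω).const_mul (16:ℝ)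
    simpa using ((h.sub_const (4 * α ^ 2)).sub_const (4 * α)).add_const 3
  have hsd : HasDerivAt (fun ω' : ℝ => Real.sqrt (16 * ω' - 4 * α ^ 2 - 4 * α + 3))
      (16 / (2 * Real.sqrt (16 * ω - 4 * α ^ 2 - 4 * α + 3))) ω := hinner.sqrt hq.ne'
  have h12 : HasDerivAt (fun ω' : ℝ => 12 * ω') 12 ω := by
    simpa using (hasDerivAt_id ω).const_mul (12:ℝ)
  have hNd : HasDerivAt (fun ω' : ℝ =>
      Real.sqrt 3 * α * Real.sqrt (16 * ω' - 4 * α ^ 2 - 4 * α + 3)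
        - 12 * ω' + 6 * α ^ 2 + 9 * α)
      (Real.sqrt 3 * α * (16 / (2 * Real.sqrt (16 * ω - 4 * α ^ 2 - 4 * α + 3))) - 12) ω :=
    (((hsd.const_mul (Real.sqrt 3 * α)).sub h12).add_const (6 * α ^ 2)).add_const (9 * α)
  have hDd : HasDerivAt (fun ω' : ℝ =>
      2 * Real.sqrt 3 * α * Real.sqrt (16 * ω' - 4 * α ^ 2 - 4 * α + 3))
      (2 * Real.sqrt 3 * α * (16 / (2 * Real.sqrt (16 * ω - 4 * α ^ 2 - 4 * α + 3)))) ω :=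
    hsd.const_mul (2 * Real.sqrt 3 * α)
  have hF := hNd.div hDd hD.ne'
  have hF' : HasDerivAt (fun ω' : ℝ =>
      (Real.sqrt 3 * α * Real.sqrt (16 * ω' - 4 * α ^ 2 - 4 * α + 3)
        - 12 * ω' + 6 * α ^ 2 + 9 * α) /
      (2 * Real.sqrt 3 * α * Real.sqrt (16 * ω' - 4 * α ^ 2 - 4 * α + 3)))
      (-(2 * Real.sqrt 3 * (2 * α + 8 * ω + 3))
        / (α * Real.sqrt (16 * ω - 4 * α ^ 2 - 4 * α + 3) ^ 3)) ω := by
    exact hF.congr_deriv (modulus_aux ω α _ _ hα.ne' hs.ne' hr3.ne' hs2 hr2).symm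
  have hK := hF'.sqrt hND.ne'
  have hd : deriv (fun ω' => modulusK α ω') ω =
      (-(2 * Real.sqrt 3 * (2 * α + 8 * ω + 3))
        / (α * Real.sqrt (16 * ω - 4 * α ^ 2 - 4 * α + 3) ^ 3)) /
      (2 * Real.sqrt ((Real.sqrt 3 * α * Real.sqrt (16 * ω - 4 * α ^ 2 - 4 * α + 3)
        - 12 * ω + 6 * α ^ 2 + 9 * α) /
        (2 * Real.sqrt 3 * α * Real.sqrt (16 * ω - 4 * α ^ 2 - 4 * α + 3)))) :=
    HasDerivAt.deriv (by exact hK)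
  have hk : 0 < Real.sqrt ((Real.sqrt 3 * α * Real.sqrt (16 * ω - 4 * α ^ 2 - 4 * α + 3)
      - 12 * ω + 6 * α ^ 2 + 9 * α) /
      (2 * Real.sqrt 3 * α * Real.sqrt (16 * ω - 4 * α ^ 2 - 4 * α + 3))) :=
    Real.sqrt_pos.2 hND
  have hq32 : (16 * ω - 4 * α ^ 2 - 4 * α + 3) ^ ((3 : ℝ) / 2)
      = Real.sqrt (16 * ω - 4 * α ^ 2 - 4 * α + 3) ^ 3 := by
    rw [Real.sqrt_eq_rpow, ← Real.rpow_natCast ((16 * ω - 4 * α ^ 2 - 4 * α + 3) ^ ((1:ℝ)/2)) 3,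
      ← Real.rpow_mul hq.le]
    norm_num
  have hmk : modulusK α ω = Real.sqrt ((Real.sqrt 3 * α * Real.sqrt (16 * ω - 4 * α ^ 2 - 4 * α + 3)
      - 12 * ω + 6 * α ^ 2 + 9 * α) /
      (2 * Real.sqrt 3 * α * Real.sqrt (16 * ω - 4 * α ^ 2 - 4 * α + 3))) := rfl
  constructor
  · rw [hd, hmk, hq32]
    exact modulus_aux2 _ _ _ _ _ hk.ne' hα.ne' hs.ne' 
  · rw [hd]
    apply div_neg_of_neg_of_pos
    · apply div_neg_of_neg_of_pos
      · exact neg_lt_zero.mpr (mul_pos (by positivity) (by linarith))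
      · positivity
    · positivity
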